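/- Let λ be the Minkowski functional of the set S = {x ∈ U : Σ_{n=1}^∞ x_n^{2n} ≤ 1} ⊆ U. Then: (a) for all x, y ∈ U with x + y ∈ U, λ(x+y) ≤ λ(x) + λ(y), and hence |λ(x) − λ(y)| ≤ λ(x−y) whenever x, y, x−y ∈ U; (b) for all x ∈ U and a ∈ ℝ with a·x ∈ U, λ(a·x) = |a|·λ(x); (c) for all x ∈ U, ‖x‖_∞ ≤ λ(x) ≤ 2‖x‖_∞, where ‖x‖_∞ = sup_j |x_j|. -/

import Mathlib

open scoped ENNReal
open scoped Pointwise

set_option maxHeartbeats 1000000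
set_option synthInstance.maxHeartbeats 400000

noncomputable section

/-- `ℓ_∞`: bounded real sequences with the sup norm. -/
abbrev Linf := lp (fun _ : ℕ => ℝ) ⊤

/-- The set `U ⊆ ℓ_∞` of sequences eventually bounded by some `a < 3/4`. -/
def U : Set Linf :=
  {x | ∃ (j₀ : ℕ) (a : ℝ), 0 < a ∧ a < 3 / 4 ∧ ∀ j > j₀, |x j| < a}

/-- `C(x) = ∑_{n≥1} x_n^{2n}` (indexed here by `n : ℕ` via `n ↦ n+1`). -/
def Cfun (x : Linf) : ℝ := ∑' n : ℕ, (x n) ^ (2 * (n + 1))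

/-- The set `S = {x ∈ U : C(x) ≤ 1}`. -/
def S : Set Linf := {x ∈ U | Cfun x ≤ 1}

/-- The Minkowski functional of `S`: `λ(x) = inf {t > 0 : t⁻¹ x ∈ S}`. -/
def lam (x : Linf) : ℝ := sInf {t : ℝ | 0 < t ∧ t⁻¹ • x ∈ S}

namespace LamAux

lemma term_nonneg (x : Linf) (n : ℕ) : 0 ≤ (x n) ^ (2 * (n + 1)) :=
  (even_two_mul _).pow_nonneg _

lemma summable_memU {x : Linf} (hx : x ∈ U) :
    Summable (fun n : ℕ => (x n) ^ (2 * (n + 1))) := by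
  obtain ⟨j₀, a, ha, ha34, hbd⟩ := hx
  have ha1 : a ^ 2 < 1 := by nlinarith
  have hg : Summable (fun n : ℕ => (a ^ 2) ^ (n + 1)) :=
    (summable_nat_add_iff 1).2 (summable_geometric_of_lt_one (by positivity) ha1)
  refine Summable.of_norm_bounded_eventually hg ?_
  rw [Nat.cofinite_eq_atTop, Filter.eventually_atTop]
  refine ⟨j₀ + 1, fun n hn => ?_⟩
  have h1 : |x n| < a := hbd n (by omega)
  calc ‖(x n) ^ (2 * (n + 1))‖ = |x n| ^ (2 * (n + 1)) := by
        rw [Real.norm_eq_abs, ← pow_abs]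
  _ ≤ a ^ (2 * (n + 1)) := pow_le_pow_left₀ (abs_nonneg _) h1.le _
  _ = (a ^ 2) ^ (n + 1) := by rw [← pow_mul]

lemma Cfun_neg (x : Linf) : Cfun (-x) = Cfun x := by
  unfold Cfun
  refine tsum_congr fun n => ?_
  have : (-x : Linf) n = -(x n) := by rw [lp.coeFn_neg]; rfl
  rw [this, Even.neg_pow (even_two_mul _)]

lemma U_neg {x : Linf} (hx : x ∈ U) : -x ∈ U := by
  obtain ⟨j₀, a, ha, ha34, hbd⟩ := hx
  refine ⟨j₀, a, ha, ha34, fun j hj => ?_⟩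
  have : (-x : Linf) j = -(x j) := by rw [lp.coeFn_neg]; rfl
  rw [this, abs_neg]; exact hbd j hj

lemma zero_mem_S : (0 : Linf) ∈ S := by
  constructor
  · refine ⟨0, 1/2, by norm_num, by norm_num, fun j _ => ?_⟩
    simp only [lp.coeFn_zero, Pi.zero_apply, abs_zero]
    norm_num
  · have h0 : Cfun (0 : Linf) = 0 := by
      unfold Cfun
      have : ∀ n : ℕ, ((0 : Linf) n) ^ (2 * (n + 1)) = 0 := fun n => by
        simp only [lp.coeFn_zero, Pi.zero_apply]
        exact zero_pow (by omega)
      simp [this]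
    rw [h0]; norm_num

lemma S_neg {x : Linf} (hx : x ∈ S) : -x ∈ S :=
  ⟨U_neg hx.1, by rw [Cfun_neg]; exact hx.2⟩

lemma norm_le_one_of_memS {x : Linf} (hx : x ∈ S) : ‖x‖ ≤ 1 := by
  refine lp.norm_le_of_forall_le one_pos.le fun i => ?_
  have hsum := summable_memU hx.1
  have hterm : (x i) ^ (2 * (i + 1)) ≤ 1 :=
    le_trans (Summable.le_tsum hsum i fun j _ => term_nonneg x j) hx.2
  have h2 : |x i| ^ (2 * (i + 1)) ≤ 1 := by
    rwa [Even.pow_abs (even_two_mul _)]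
  rw [Real.norm_eq_abs]
  exact (pow_le_one_iff_of_nonneg (abs_nonneg _) (by omega)).1 h2

lemma memS_of_norm_le_half {x : Linf} (h : ‖x‖ ≤ 1/2) : x ∈ S := by
  have hcoord : ∀ j, |x j| ≤ 1/2 := fun j =>
    le_trans (by simpa [Real.norm_eq_abs] using
      lp.norm_apply_le_norm (by simp : (⊤ : ℝ≥0∞) ≠ 0) x j) h
  have hU : x ∈ U := ⟨0, 5/8, by norm_num, by norm_num,
    fun j _ => lt_of_le_of_lt (hcoord j) (by norm_num)⟩
  refine ⟨hU, ?_⟩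
  have hsum := summable_memU hU
  have hg : Summable (fun n : ℕ => ((1:ℝ)/4) ^ (n + 1)) :=
    (summable_nat_add_iff 1).2 (summable_geometric_of_lt_one (by norm_num) (by norm_num))
  have hle : ∀ n : ℕ, (x n) ^ (2 * (n + 1)) ≤ ((1:ℝ)/4) ^ (n + 1) := by
    intro n
    have h1 : |x n| ^ (2 * (n + 1)) ≤ ((1:ℝ)/2) ^ (2 * (n + 1)) :=
      pow_le_pow_left₀ (abs_nonneg _) (hcoord n) _
    rw [Even.pow_abs (even_two_mul _)] at h1
    calc (x n) ^ (2 * (n + 1)) ≤ ((1:ℝ)/2) ^ (2 * (n + 1)) := h1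
    _ = ((1:ℝ)/4) ^ (n + 1) := by
        rw [pow_mul]; norm_num
  calc Cfun x ≤ ∑' n : ℕ, ((1:ℝ)/4) ^ (n + 1) := Summable.tsum_le_tsum hle hsum hg
  _ = (1:ℝ)/3 := by
      have h2 : ∑' n : ℕ, ((1:ℝ)/4) ^ (n + 1) = (∑' n : ℕ, ((1:ℝ)/4) ^ n) * (1/4) := by
        rw [← tsum_mul_right]
        exact tsum_congr fun n => by rw [pow_succ]
      rw [h2, tsum_geometric_of_lt_one (by norm_num) (by norm_num)]
      norm_num
  _ ≤ 1 := by norm_num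

lemma coords_comb (θ σ : ℝ) (x y : Linf) (j : ℕ) :
    (θ • x + σ • y : Linf) j = θ * x j + σ * y j := by
  rw [lp.coeFn_add, lp.coeFn_smul, lp.coeFn_smul]; rfl

lemma convex_S : Convex ℝ S := by
  intro x hx y hy θ σ hθ hσ hsum
  have hU : θ • x + σ • y ∈ U := by
    obtain ⟨j₀, a, ha, ha34, hxa⟩ := hx.1
    obtain ⟨j₁, b, hb, hb34, hyb⟩ := hy.1
    refine ⟨max j₀ j₁, max a b, lt_max_of_lt_left ha, max_lt ha34 hb34, fun j hj => ?_⟩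
    have h1 : |x j| < max a b :=
      (hxa j (lt_of_le_of_lt (le_max_left _ _) hj)).trans_le (le_max_left a b)
    have h2 : |y j| < max a b :=
      (hyb j (lt_of_le_of_lt (le_max_right _ _) hj)).trans_le (le_max_right a b)
    rw [coords_comb]
    have habs : |θ * x j + σ * y j| ≤ θ * |x j| + σ * |y j| := by
      refine (abs_add_le _ _).trans ?_
      rw [abs_mul, abs_mul, abs_of_nonneg hθ, abs_of_nonneg hσ]
    refine habs.trans_lt ?_
    have hlt : θ * |x j| + σ * |y j| < θ * (max a b) + σ * (max a b) ∨
        θ * |x j| + σ * |y j| = θ * |x j| + σ * |y j| := Or.inr rfl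
    rcases hθ.lt_or_eq with h | h
    · have e1 : θ * |x j| < θ * (max a b) := mul_lt_mul_of_pos_left h1 h
      have e2 : σ * |y j| ≤ σ * (max a b) := mul_le_mul_of_nonneg_left h2.le hσ
      calc θ * |x j| + σ * |y j| < θ * (max a b) + σ * (max a b) := by linarith
      _ = (θ + σ) * (max a b) := by ring
      _ = max a b := by rw [hsum, one_mul]
    · have hσ1 : σ = 1 := by linarith
      simpa [← h, hσ1] using h2
  refine ⟨hU, ?_⟩
  have hx' := summable_memU hx.1
  have hy' := summable_memU hy.1
  have hmix := summable_memU hU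
  have key : ∀ n : ℕ, ((θ • x + σ • y : Linf) n) ^ (2 * (n + 1)) ≤
      θ * (x n) ^ (2 * (n + 1)) + σ * (y n) ^ (2 * (n + 1)) := by
    intro n
    have := (Even.convexOn_pow (even_two_mul (n + 1))).2
      (Set.mem_univ (x n)) (Set.mem_univ (y n)) hθ hσ hsum
    simpa [coords_comb, smul_eq_mul] using this
  calc Cfun (θ • x + σ • y)
      ≤ ∑' n : ℕ, (θ * (x n) ^ (2 * (n + 1)) + σ * (y n) ^ (2 * (n + 1))) :=
        Summable.tsum_le_tsum key hmix ((hx'.mul_left θ).add (hy'.mul_left σ))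
  _ = θ * Cfun x + σ * Cfun y := by
      rw [Summable.tsum_add (hx'.mul_left θ) (hy'.mul_left σ), tsum_mul_left, tsum_mul_left]
      rfl
  _ ≤ θ * 1 + σ * 1 :=
      add_le_add (mul_le_mul_of_nonneg_left hx.2 hθ) (mul_le_mul_of_nonneg_left hy.2 hσ)
  _ = 1 := by linarith

def Tset (x : Linf) : Set ℝ := {t : ℝ | 0 < t ∧ t⁻¹ • x ∈ S}

lemma lam_eq (x : Linf) : lam x = sInf (Tset x) := rfl

lemma Tset_bddBelow (x : Linf) : BddBelow (Tset x) := ⟨0, fun _ ht => ht.1.le⟩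

lemma div_mul_inv_eq {t u : ℝ} (ht : t ≠ 0) : t / u * t⁻¹ = u⁻¹ := by
  rw [div_eq_mul_inv, mul_comm t u⁻¹, mul_assoc, mul_inv_cancel₀ ht, mul_one]

lemma Tset_upward {x : Linf} {t t' : ℝ} (ht : t ∈ Tset x) (h : t ≤ t') : t' ∈ Tset x := by
  have ht' : 0 < t' := ht.1.trans_le h
  refine ⟨ht', ?_⟩
  have heq : t'⁻¹ • x = (t / t') • (t⁻¹ • x) + (1 - t / t') • (0 : Linf) := by
    rw [smul_zero, add_zero, smul_smul, div_mul_inv_eq ht.1.ne']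
  rw [heq]
  exact convex_S ht.2 zero_mem_S (div_nonneg ht.1.le ht'.le)
    (by rw [sub_nonneg]; exact (div_le_one ht').2 h) (by ring)

lemma Tset_add {x y : Linf} {t s : ℝ} (ht : t ∈ Tset x) (hs : s ∈ Tset y) :
    t + s ∈ Tset (x + y) := by
  have hts : 0 < t + s := by linarith [ht.1, hs.1]
  refine ⟨hts, ?_⟩
  have heq : (t + s)⁻¹ • (x + y) =
      (t / (t + s)) • (t⁻¹ • x) + (s / (t + s)) • (s⁻¹ • y) := by
    rw [smul_smul, smul_smul, div_mul_inv_eq ht.1.ne', div_mul_inv_eq hs.1.ne', ← smul_add]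
  rw [heq]
  refine convex_S ht.2 hs.2 (div_nonneg ht.1.le hts.le) (div_nonneg hs.1.le hts.le) ?_
  rw [← add_div, div_self hts.ne']

lemma Tset_mem_two_norm_add_one {x : Linf} : 2 * ‖x‖ + 1 ∈ Tset x := by
  have hpos : (0:ℝ) < 2 * ‖x‖ + 1 := by positivity
  refine ⟨hpos, memS_of_norm_le_half ?_⟩
  rw [norm_smul, Real.norm_eq_abs, abs_of_pos (inv_pos.2 hpos), inv_mul_le_iff₀ hpos]
  nlinarith [norm_nonneg x]

lemma Tset_nonempty (x : Linf) : (Tset x).Nonempty := ⟨_, Tset_mem_two_norm_add_one⟩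

lemma lam_nonneg (x : Linf) : 0 ≤ lam x :=
  le_csInf (Tset_nonempty x) fun _ ht => ht.1.le

lemma lam_le {x : Linf} {t : ℝ} (ht : t ∈ Tset x) : lam x ≤ t :=
  csInf_le (Tset_bddBelow x) ht

lemma mem_Tset_of_lam_lt {x : Linf} {t : ℝ} (h : lam x < t) : t ∈ Tset x := by
  obtain ⟨s, hs, hst⟩ := exists_lt_of_csInf_lt (Tset_nonempty x) h
  exact Tset_upward hs hst.le

lemma lam_zero : lam (0 : Linf) = 0 := by
  have h : Tset (0 : Linf) = Set.Ioi 0 := by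
    ext t
    simp only [Tset, Set.mem_setOf_eq, smul_zero, Set.mem_Ioi]
    exact ⟨fun h => h.1, fun h => ⟨h, zero_mem_S⟩⟩
  rw [lam_eq, h, csInf_Ioi]

lemma lam_subadd {x y : Linf} : lam (x + y) ≤ lam x + lam y := by
  refine le_of_forall_pos_le_add fun ε hε => ?_
  have ht : lam x + ε/2 ∈ Tset x := mem_Tset_of_lam_lt (by linarith)
  have hs : lam y + ε/2 ∈ Tset y := mem_Tset_of_lam_lt (by linarith)
  have h := lam_le (Tset_add ht hs)
  linarith

lemma lam_neg (x : Linf) : lam (-x) = lam x := by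
  have h : Tset (-x) = Tset x := by
    ext t
    simp only [Tset, Set.mem_setOf_eq, smul_neg]
    constructor
    · rintro ⟨ht, hmem⟩
      exact ⟨ht, by simpa using S_neg hmem⟩
    · rintro ⟨ht, hmem⟩
      exact ⟨ht, S_neg hmem⟩
  rw [lam_eq, lam_eq, h]

lemma lam_smul (x : Linf) (a : ℝ) : lam (a • x) = |a| * lam x := by
  rcases eq_or_ne a 0 with rfl | ha
  · simp [lam_zero]
  · have habs : 0 < |a| := abs_pos.2 ha
    have hTeq : Tset (a • x) = |a| • Tset x := by
      ext t
      constructor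
      · rintro ⟨ht, hmem⟩
        refine ⟨t / |a|, ⟨div_pos ht habs, ?_⟩, by show |a| • (t / |a|) = t; rw [smul_eq_mul, mul_div_assoc', mul_comm, mul_div_assoc, div_self habs.ne', mul_one]⟩
        have heq1 : (t / |a|)⁻¹ • x = (|a| / a) • (t⁻¹ • (a • x)) := by
          rw [smul_smul, smul_smul]
          congr 1
          field_simp
        rw [heq1]
        rcases abs_cases a with ⟨h1, _⟩ | ⟨h1, _⟩
        · rw [h1, div_self ha, one_smul]; exact hmem
        · rw [h1, neg_div, div_self ha, neg_smul, one_smul]; exact S_neg hmem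
      · rintro ⟨s, ⟨hs, hmem⟩, rfl⟩
        refine ⟨by simpa [smul_eq_mul] using mul_pos habs hs, ?_⟩
        have heq1 : (|a| • s)⁻¹ • (a • x) = (a / |a|) • (s⁻¹ • x) := by
          rw [smul_smul, smul_smul, smul_eq_mul]
          congr 1
          field_simp
        rw [heq1]
        rcases abs_cases a with ⟨h1, _⟩ | ⟨h1, _⟩
        · rw [h1, div_self ha, one_smul]
          exact hmem
        · rw [h1, div_neg, div_self ha, neg_smul, one_smul]
          exact S_neg hmem
    rw [lam_eq, lam_eq, hTeq, Real.sInf_smul_of_nonneg (abs_nonneg a), smul_eq_mul]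

end LamAux

/-- Properties of the Minkowski functional `λ` of `S`: subadditivity and the 1-Lipschitz
property on `U`, absolute homogeneity, and equivalence with the sup norm on `U`. -/
theorem lam_properties :
    (∀ x ∈ U, ∀ y ∈ U, x + y ∈ U → lam (x + y) ≤ lam x + lam y) ∧
    (∀ x ∈ U, ∀ y ∈ U, x - y ∈ U → |lam x - lam y| ≤ lam (x - y)) ∧
    (∀ x ∈ U, ∀ a : ℝ, a • x ∈ U → lam (a • x) = |a| * lam x) ∧
    (∀ x ∈ U, ‖x‖ ≤ lam x ∧ lam x ≤ 2 * ‖x‖) := by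
  open LamAux in
  refine ⟨fun x _ y _ _ => lam_subadd, fun x _ y _ _ => ?_, fun x _ a _ => lam_smul x a,
    fun x _ => ⟨?_, ?_⟩⟩
  · rw [abs_sub_le_iff]
    constructor
    · have h := lam_subadd (x := y) (y := x - y)
      rw [show y + (x - y) = x by abel] at h
      linarith
    · have h := lam_subadd (x := x) (y := y - x)
      rw [show x + (y - x) = y by abel, show y - x = -(x - y) by abel, lam_neg] at h
      linarith
  · refine le_csInf (Tset_nonempty x) fun t ht => ?_
    have h1 := norm_le_one_of_memS ht.2
    rw [norm_smul, Real.norm_eq_abs, abs_of_pos (inv_pos.2 ht.1), inv_mul_le_iff₀ ht.1] at h1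
    linarith
  · rcases eq_or_ne x 0 with rfl | hx0
    · simp [lam_zero]
    · have hnorm : 0 < ‖x‖ :=
        lt_of_le_of_ne (norm_nonneg x) (fun h => hx0 (norm_eq_zero.mp h.symm))
      refine lam_le ⟨by positivity, memS_of_norm_le_half ?_⟩
      rw [norm_smul, Real.norm_eq_abs,
        abs_of_pos (inv_pos.2 (by positivity : (0:ℝ) < 2 * ‖x‖)),
        inv_mul_le_iff₀ (by positivity)]
      linarith
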